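/- arXiv:0708.1054 — 5 statements merged into one kernel-verified Lean document; each statement's English description precedes it below -/
import Mathlib

section
/- If the coefficients satisfy a_0 \le a_1 \le \dots \le a_n, then the Bernstein polynomial F_a(t) = \sum_{i=0}^n a_i \binom{n}{i} t^i (1-t)^{n-i} is monotone nondecreasing on [0,1]. -/
/-!
The derivative of the Bernstein polynomial of order `n` with coefficients `a` is `n` times the
Bernstein polynomial of order `n - 1` whose coefficients are the forward differences
`a (ν + 1) - a ν`. Bernstein basis polynomials are nonnegative on `[0, 1]`, so for nondecreasing
coefficients the derivative is nonnegative there.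
-/

open Finset Set Polynomial

namespace bernsteinPolynomial

variable {R : Type*} [CommRing R]

theorem derivative_sum_smul (n : ℕ) (a : ℕ → R) :
    derivative (∑ ν ∈ range (n + 1), a ν • bernsteinPolynomial R n ν) =
      n * ∑ ν ∈ range n, (a (ν + 1) - a ν) • bernsteinPolynomial R (n - 1) ν := by
  -- For `n ≥ 1` the basis polynomial vanishes; for `n = 0` the factor `n` does.
  have last : (n : R[X]) * (a n • bernsteinPolynomial R (n - 1) n) = 0 := by
    rcases n.eq_zero_or_pos with rfl | hn
    · simp
    · rw [eq_zero_of_lt R (Nat.sub_lt hn one_pos), smul_zero, mul_zero]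
  have shift : (n : R[X]) * ∑ ν ∈ range n, a ν • bernsteinPolynomial R (n - 1) ν =
      n * (∑ ν ∈ range n, a (ν + 1) • bernsteinPolynomial R (n - 1) (ν + 1) +
        a 0 • bernsteinPolynomial R (n - 1) 0) := by
    rw [← sum_range_succ' (fun ν => a ν • bernsteinPolynomial R (n - 1) ν), sum_range_succ,
      mul_add, last, add_zero]
  rw [sum_range_succ', derivative_add, derivative_sum]
  simp only [derivative_smul, derivative_succ, derivative_zero, ← mul_smul_comm, smul_sub,
    mul_sub, sub_smul, neg_mul, smul_neg, sum_sub_distrib, ← mul_sum]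
  linear_combination shift

theorem eval_nonneg (n ν : ℕ) {t : ℝ} (ht : t ∈ Set.Icc 0 1) :
    0 ≤ (bernsteinPolynomial ℝ n ν).eval t := by
  have ht₀ : 0 ≤ t := ht.1
  have ht₁ : 0 ≤ 1 - t := sub_nonneg.2 ht.2
  simp only [bernsteinPolynomial, eval_mul, eval_pow, eval_sub, eval_one, eval_X, eval_natCast]
  positivity

theorem monotoneOn_eval_sum_smul {n : ℕ} {a : ℕ → ℝ} (ha : ∀ i < n, a i ≤ a (i + 1)) :
    MonotoneOn (fun t => (∑ ν ∈ range (n + 1), a ν • bernsteinPolynomial ℝ n ν).eval t)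
      (Set.Icc 0 1) := by
  set p := ∑ ν ∈ range (n + 1), a ν • bernsteinPolynomial ℝ n ν
  refine monotoneOn_of_deriv_nonneg (convex_Icc 0 1) p.continuousOn
    p.differentiable.differentiableOn fun t ht => ?_
  rw [Polynomial.deriv, derivative_sum_smul, eval_mul, eval_natCast, eval_finsetSum]
  refine mul_nonneg n.cast_nonneg (sum_nonneg fun ν hν => ?_)
  rw [eval_smul, smul_eq_mul]
  exact mul_nonneg (sub_nonneg.2 (ha ν (mem_range.1 hν)))
    (eval_nonneg _ _ (interior_subset ht))

end bernsteinPolynomial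

/-- If `a_0 ≤ a_1 ≤ ⋯ ≤ a_n`, then the Bernstein polynomial `F_a` is monotone
nondecreasing on `[0,1]`. -/
theorem bernstein_monotoneOn (n : ℕ) (a : ℕ → ℝ)
    (ha : ∀ i, i < n → a i ≤ a (i+1)) :
    MonotoneOn (fun t : ℝ => ∑ i ∈ Finset.range (n+1),
        a i * (n.choose i : ℝ) * t ^ i * (1 - t) ^ (n - i)) (Icc (0:ℝ) 1) := by
  convert bernsteinPolynomial.monotoneOn_eval_sum_smul ha using 2 with t
  simp only [eval_finsetSum, eval_smul, bernsteinPolynomial, eval_mul, eval_pow, eval_sub,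
    eval_one, eval_X, eval_natCast, smul_eq_mul, mul_assoc]
end

section
/- If the coefficient sequence (a_i) is concave in the sense that a_{i+1} + a_{i-1} \le 2 a_i for all i = 1, ..., n-1, then the Bernstein polynomial F_a(t) = \sum_{i=0}^n a_i \binom{n}{i} t^i (1-t)^{n-i} is a concave function on [0,1]. -/
open Finset Set

/-!
Differentiating a polynomial in Bernstein form `∑ bᵢ B_{n,i}` yields `n` times the Bernstein form
of degree `n - 1` of the forward differences `b_{i+1} - b_i`. Hence `F_a''` is `n (n - 1)` times the
Bernstein form of the second differences of `a`, which are nonpositive by concavity of `a`, and the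
Bernstein basis polynomials are nonnegative on `[0, 1]`.
-/

open Polynomial fwdDiff

noncomputable def bernsteinCombination {R : Type*} [CommRing R] (n : ℕ) (b : ℕ → R) : R[X] :=
  ∑ i ∈ range (n + 1), C (b i) * bernsteinPolynomial R n i

namespace bernsteinCombination

variable {R : Type*} [CommRing R]

theorem eval_eq (n : ℕ) (b : ℕ → R) (t : R) :
    (bernsteinCombination n b).eval t =
      ∑ i ∈ range (n + 1), b i * (n.choose i : R) * t ^ i * (1 - t) ^ (n - i) := by
  simp [bernsteinCombination, bernsteinPolynomial, eval_finsetSum, mul_assoc]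

theorem derivative_succ (m : ℕ) (b : ℕ → R) :
    derivative (bernsteinCombination (m + 1) b) =
      ((m + 1 : ℕ) : R[X]) * bernsteinCombination m (Δ_[1] b) := by
  have shift : ∑ i ∈ range (m + 1), C (b (i + 1)) * bernsteinPolynomial R m (i + 1) =
      ∑ i ∈ range (m + 1), C (b i) * bernsteinPolynomial R m i -
        C (b 0) * bernsteinPolynomial R m 0 := by
    rw [eq_sub_iff_add_eq, ← sum_range_succ' (fun i => C (b i) * bernsteinPolynomial R m i),
      sum_range_succ, bernsteinPolynomial.eq_zero_of_lt R (Nat.lt_succ_self m), mul_zero, add_zero]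
  simp only [bernsteinCombination, derivative_sum, derivative_C_mul]
  rw [sum_range_succ', bernsteinPolynomial.derivative_zero]
  simp only [bernsteinPolynomial.derivative_succ, Nat.add_sub_cancel, fwdDiff, map_sub, sub_mul,
    mul_sub, sum_sub_distrib, mul_left_comm _ ((m : R[X]) + 1), ← mul_sum, Nat.cast_add,
    Nat.cast_one]
  linear_combination (-((m : R[X]) + 1)) * shift

theorem eval_nonpos [PartialOrder R] [IsOrderedRing R] {n : ℕ} {b : ℕ → R}
    (hb : ∀ i ≤ n, b i ≤ 0) {t : R} (ht₀ : 0 ≤ t) (ht₁ : t ≤ 1) :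
    (bernsteinCombination n b).eval t ≤ 0 := by
  rw [eval_eq]
  refine sum_nonpos fun i hi => ?_
  simp only [mul_assoc]
  exact mul_nonpos_of_nonpos_of_nonneg (hb i (Nat.lt_succ_iff.mp (mem_range.mp hi)))
    (mul_nonneg (Nat.cast_nonneg _)
      (mul_nonneg (pow_nonneg ht₀ _) (pow_nonneg (sub_nonneg.2 ht₁) _)))

theorem concaveOn_eval {m : ℕ} {b : ℕ → ℝ} (hb : ∀ i ≤ m, Δ_[1] (Δ_[1] b) i ≤ 0) :
    ConcaveOn ℝ (Icc 0 1) fun t => (bernsteinCombination (m + 2) b).eval t := by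
  set p := bernsteinCombination (m + 2) b
  have hp'' : derivative (derivative p) =
      ((m + 2 : ℕ) : ℝ[X]) *
        (((m + 1 : ℕ) : ℝ[X]) * bernsteinCombination m (Δ_[1] (Δ_[1] b))) := by
    rw [derivative_succ, derivative_natCast_mul, derivative_succ]
  refine concaveOn_of_hasDerivWithinAt2_nonpos (convex_Icc 0 1) p.continuousOn
    (fun x _ => (p.hasDerivAt x).hasDerivWithinAt)
    (fun x _ => (p.derivative.hasDerivAt x).hasDerivWithinAt) fun x hx => ?_
  rw [interior_Icc] at hx
  rw [hp'', eval_mul, eval_mul, eval_natCast, eval_natCast]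
  exact mul_nonpos_of_nonneg_of_nonpos (Nat.cast_nonneg _) (mul_nonpos_of_nonneg_of_nonpos
    (Nat.cast_nonneg _) (eval_nonpos hb hx.1.le hx.2.le))

end bernsteinCombination

/-- If the coefficient sequence is concave (`a_{i+1} + a_{i-1} ≤ 2 a_i`), then the
Bernstein polynomial `F_a` is concave on `[0,1]`. -/
theorem bernstein_concaveOn (n : ℕ) (hn : 2 ≤ n) (a : ℕ → ℝ)
    (hcc : ∀ i, 1 ≤ i → i ≤ n - 1 → a (i+1) + a (i-1) ≤ 2 * a i) :
    ConcaveOn ℝ (Icc (0:ℝ) 1) (fun t : ℝ => ∑ i ∈ Finset.range (n+1),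
        a i * (n.choose i : ℝ) * t ^ i * (1 - t) ^ (n - i)) := by
  obtain ⟨m, rfl⟩ : ∃ m, n = m + 2 := ⟨n - 2, by omega⟩
  have hΔ : ∀ i ≤ m, Δ_[1] (Δ_[1] a) i ≤ 0 := fun i hi => by
    have := hcc (i + 1) (by omega) (by omega)
    simp only [fwdDiff, Nat.add_sub_cancel] at this ⊢
    linarith
  simpa only [bernsteinCombination.eval_eq] using bernsteinCombination.concaveOn_eval hΔ
end

section
/- Let n \ge 3 and suppose a_0 = a_1 < a_2 \le \dots \le a_l and a_l \ge a_{l+1} \ge \dots \ge a_{n-1} > a_n for some 2 \le l \le n-1. Then there exists s in (0,1) such that F_a' > 0 on (0,s), F_a'(s) = 0, and F_a' < 0 on (s,1); in particular s is the unique maximum point of F_a on [0,1] and F_a is strictly increasing on [0,s] and strictly decreasing on [s,1]. -/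
open Finset Set Filter Topology

/-!
By the forward-difference formula, `F_a' = n ∑ c_i t^i (1-t)^(n-1-i)` with
`c_i = (a_{i+1} - a_i) C(n-1, i)`, and the substitution `x = t / (1 - t)` turns this sum into
`(1-t)^(n-1) x^l Q(x)` with `Q(x) = ∑ c_i x^(i-l)` (`shiftedPowSum`). The hypotheses say
exactly that `c_i ≥ 0` for `i < l` and `c_i ≤ 0` for `l ≤ i ≤ n - 1`, with `c_1 > 0` and
`c_{n-1} < 0`. Then every term of `Q` is antitone on `(0, ∞)` and the term `c_1 x^(1-l)`
strictly so, hence `Q` is strictly decreasing; it tends to `+∞` at `0⁺` and is eventually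
negative, so it changes sign exactly once, and so does `F_a'`.
-/

lemma zpow_le_zpow_left_of_nonpos₀ {x y : ℝ} {k : ℤ} (hk : k ≤ 0) (hx : 0 < x)
    (hxy : x ≤ y) : y ^ k ≤ x ^ k := by
  have := zpow_le_zpow_left₀ (neg_nonneg.2 hk) (inv_nonneg.2 (hx.trans_le hxy).le)
    (inv_anti₀ hx hxy)
  rwa [inv_zpow', inv_zpow', neg_neg] at this

lemma zpow_lt_zpow_left_of_neg₀ {x y : ℝ} {k : ℤ} (hk : k < 0) (hx : 0 < x) (hxy : x < y) :
    y ^ k < x ^ k := by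
  have := zpow_lt_zpow_left₀ (neg_pos.2 hk) (inv_nonneg.2 (hx.trans hxy).le)
    (inv_strictAnti₀ hx hxy)
  rwa [inv_zpow', inv_zpow', neg_neg] at this

theorem hasDerivAt_bernstein_sum (m : ℕ) (a : ℕ → ℝ) (t : ℝ) :
    HasDerivAt (fun t : ℝ => ∑ i ∈ range (m + 1 + 1),
        a i * ((m + 1).choose i : ℝ) * t ^ i * (1 - t) ^ (m + 1 - i))
      ((m + 1) * ∑ i ∈ range (m + 1),
        (a (i + 1) - a i) * (m.choose i : ℝ) * t ^ i * (1 - t) ^ (m - i)) t := by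
  have hterm : ∀ i, HasDerivAt
      (fun t : ℝ => a i * ((m + 1).choose i : ℝ) * t ^ i * (1 - t) ^ (m + 1 - i))
      (a i * (m + 1).choose i * (i * t ^ (i - 1)) * (1 - t) ^ (m + 1 - i) -
        a i * (m + 1).choose i * ((m + 1 - i : ℕ) : ℝ) * t ^ i * (1 - t) ^ (m - i)) t := by
    intro i
    refine (((hasDerivAt_pow i t).const_mul (a i * (m + 1).choose i)).mul
      (((hasDerivAt_id' t).const_sub 1).fun_pow (m + 1 - i))).congr_deriv ?_
    rw [show m + 1 - i - 1 = m - i by omega]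
    ring
  have hup : ∑ i ∈ range (m + 1 + 1),
      a i * (m + 1).choose i * (i * t ^ (i - 1)) * (1 - t) ^ (m + 1 - i) =
      ∑ i ∈ range (m + 1), (m + 1) * (a (i + 1) * m.choose i * t ^ i * (1 - t) ^ (m - i)) := by
    rw [sum_range_succ', Nat.cast_zero, zero_mul, mul_zero, zero_mul, add_zero]
    refine sum_congr rfl fun i _ => ?_
    have hchoose : ((m + 1 : ℕ) : ℝ) * m.choose i = (m + 1).choose (i + 1) * (i + 1 : ℕ) := by
      exact_mod_cast Nat.add_one_mul_choose_eq m i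
    rw [Nat.add_sub_cancel, Nat.add_sub_add_right]
    push_cast at hchoose ⊢
    linear_combination (-a (i + 1) * t ^ i * (1 - t) ^ (m - i)) * hchoose
  have hdown : ∑ i ∈ range (m + 1 + 1),
      a i * (m + 1).choose i * ((m + 1 - i : ℕ) : ℝ) * t ^ i * (1 - t) ^ (m - i) =
      ∑ i ∈ range (m + 1), (m + 1) * (a i * m.choose i * t ^ i * (1 - t) ^ (m - i)) := by
    rw [sum_range_succ, Nat.sub_self, Nat.cast_zero, mul_zero, zero_mul, zero_mul, add_zero]
    refine sum_congr rfl fun i _ => ?_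
    have hchoose :
        (m.choose i : ℝ) * (m + 1 : ℕ) = (m + 1).choose i * ((m + 1 - i : ℕ) : ℝ) := by
      exact_mod_cast Nat.choose_mul_succ_eq m i
    push_cast at hchoose
    linear_combination (-a i * t ^ i * (1 - t) ^ (m - i)) * hchoose
  refine (HasDerivAt.fun_sum fun i _ => hterm i).congr_deriv ?_
  rw [sum_sub_distrib, hup, hdown, ← sum_sub_distrib, mul_sum]
  exact sum_congr rfl fun i _ => by ring

noncomputable def shiftedPowSum (m l : ℕ) (c : ℕ → ℝ) (x : ℝ) : ℝ :=
  ∑ i ∈ range (m + 1), c i * x ^ ((i : ℤ) - l)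

section shiftedPowSum

variable {m l : ℕ} {c : ℕ → ℝ}

lemma pow_mul_shiftedPowSum {x : ℝ} (hx : x ≠ 0) :
    x ^ l * shiftedPowSum m l c x = ∑ i ∈ range (m + 1), c i * x ^ i := by
  rw [shiftedPowSum, mul_sum]
  refine sum_congr rfl fun i _ => ?_
  rw [mul_left_comm, ← zpow_natCast, ← zpow_add₀ hx, add_sub_cancel, zpow_natCast]

lemma continuousOn_shiftedPowSum : ContinuousOn (shiftedPowSum m l c) (Ioi 0) :=
  continuousOn_finsetSum _ fun _ _ => continuousOn_const.mul
    ((continuousOn_zpow₀ _).mono fun _ hx => ne_of_gt hx)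

lemma shiftedPowSum_term_anti (hpos : ∀ i < l, 0 ≤ c i)
    (hneg : ∀ i, l ≤ i → i ≤ m → c i ≤ 0) {i : ℕ} (hi : i ≤ m)
    {x y : ℝ} (hx : 0 < x) (hxy : x ≤ y) :
    c i * y ^ ((i : ℤ) - l) ≤ c i * x ^ ((i : ℤ) - l) := by
  rcases lt_or_ge i l with hil | hli
  · exact mul_le_mul_of_nonneg_left (zpow_le_zpow_left_of_nonpos₀ (by omega) hx hxy)
      (hpos i hil)
  · exact mul_le_mul_of_nonpos_left (zpow_le_zpow_left₀ (by omega) hx.le hxy) (hneg i hli hi)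

lemma strictAntiOn_shiftedPowSum (hpos : ∀ i < l, 0 ≤ c i)
    (hneg : ∀ i, l ≤ i → i ≤ m → c i ≤ 0) {j : ℕ} (hjm : j ≤ m) (hj : 0 < c j) :
    StrictAntiOn (shiftedPowSum m l c) (Ioi 0) := by
  intro x hx y _ hxy
  have hjl : j < l := lt_of_not_ge fun hlj => (hneg j hlj hjm).not_gt hj
  refine sum_lt_sum (fun i hi => shiftedPowSum_term_anti hpos hneg
    (Nat.lt_succ_iff.1 (mem_range.1 hi)) hx hxy.le) ⟨j, mem_range.2 (by omega), ?_⟩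
  exact mul_lt_mul_of_pos_left (zpow_lt_zpow_left_of_neg₀ (by omega) hx hxy) hj

lemma tendsto_shiftedPowSum_nhdsGT_zero (hpos : ∀ i < l, 0 ≤ c i)
    (hneg : ∀ i, l ≤ i → i ≤ m → c i ≤ 0) {j : ℕ} (hjm : j ≤ m) (hj : 0 < c j) :
    Tendsto (shiftedPowSum m l c) (𝓝[>] 0) atTop := by
  have hjl : j < l := lt_of_not_ge fun hlj => (hneg j hlj hjm).not_gt hj
  have hbound : ∀ x ∈ Ioc (0 : ℝ) 1,
      c j * x⁻¹ + ∑ i ∈ range (m + 1), min (c i) 0 ≤ shiftedPowSum m l c x := by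
    rintro x ⟨hx0, hx1⟩
    have hterm : ∀ i ∈ range (m + 1), min (c i) 0 ≤ c i * x ^ ((i : ℤ) - l) := by
      intro i hi
      rcases lt_or_ge i l with hil | hli
      · exact (min_le_right _ _).trans (mul_nonneg (hpos i hil) (zpow_nonneg hx0.le _))
      · have := shiftedPowSum_term_anti hpos hneg (Nat.lt_succ_iff.1 (mem_range.1 hi)) hx0 hx1
        rw [one_zpow, mul_one] at this
        exact (min_le_left _ _).trans this
    have hjmem : j ∈ range (m + 1) := mem_range.2 (by omega)
    have hdom : c j * x⁻¹ ≤ c j * x ^ ((j : ℤ) - l) := by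
      rw [← zpow_neg_one]
      exact mul_le_mul_of_nonneg_left (zpow_le_zpow_right_of_le_one₀ hx0 hx1 (by omega)) hj.le
    have hrest := sum_le_sum fun i (hi : i ∈ (range (m + 1)).erase j) =>
      hterm i (mem_of_mem_erase hi)
    rw [shiftedPowSum, ← add_sum_erase _ _ hjmem, ← add_sum_erase _ _ hjmem]
    linarith [min_le_right (c j) 0]
  refine tendsto_atTop_mono' _ (eventually_of_mem (Ioc_mem_nhdsGT zero_lt_one) hbound) ?_
  exact tendsto_atTop_add_const_right _ _ (tendsto_inv_nhdsGT_zero.const_mul_atTop hj)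

lemma eventually_shiftedPowSum_neg_atTop (hpos : ∀ i < l, 0 ≤ c i)
    (hneg : ∀ i, l ≤ i → i ≤ m → c i ≤ 0) {k : ℕ} (hkm : k ≤ m) (hk : c k < 0) :
    ∀ᶠ x in atTop, shiftedPowSum m l c x < 0 := by
  have hbound : ∀ x, 1 ≤ x →
      shiftedPowSum m l c x ≤ c k + (∑ i ∈ range (m + 1), max (c i) 0) * x⁻¹ := by
    intro x hx1
    have hx0 : 0 < x := one_pos.trans_le hx1
    have hterm : ∀ i ∈ range (m + 1), c i * x ^ ((i : ℤ) - l) ≤ max (c i) 0 * x⁻¹ := by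
      intro i hi
      rcases lt_or_ge i l with hil | hli
      · rw [max_eq_left (hpos i hil), ← zpow_neg_one]
        exact mul_le_mul_of_nonneg_left (zpow_le_zpow_right₀ hx1 (by omega)) (hpos i hil)
      · exact (mul_nonpos_of_nonpos_of_nonneg (hneg i hli (Nat.lt_succ_iff.1 (mem_range.1 hi)))
          (zpow_nonneg hx0.le _)).trans (by positivity)
    have hkmem : k ∈ range (m + 1) := mem_range.2 (by omega)
    have hdom : c k * x ^ ((k : ℤ) - l) ≤ c k := by
      simpa using shiftedPowSum_term_anti hpos hneg hkm one_pos hx1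
    have hrest := sum_le_sum fun i (hi : i ∈ (range (m + 1)).erase k) =>
      hterm i (mem_of_mem_erase hi)
    have hpart : ∑ i ∈ (range (m + 1)).erase k, max (c i) 0 * x⁻¹ ≤
        ∑ i ∈ range (m + 1), max (c i) 0 * x⁻¹ :=
      sum_le_sum_of_subset_of_nonneg (erase_subset k _) fun i _ _ => by positivity
    rw [shiftedPowSum, ← add_sum_erase _ _ hkmem, sum_mul]
    linarith
  have hlim : Tendsto (fun x : ℝ => c k + (∑ i ∈ range (m + 1), max (c i) 0) * x⁻¹) atTop
      (𝓝 (c k)) := by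
    have := (tendsto_const_nhds (x := c k)).add
      (tendsto_inv_atTop_zero.const_mul (∑ i ∈ range (m + 1), max (c i) 0))
    simpa using this
  filter_upwards [eventually_ge_atTop 1, hlim.eventually (gt_mem_nhds hk)] with x hx1 hx
  exact (hbound x hx1).trans_lt hx

lemma exists_shiftedPowSum_eq_zero (hpos : ∀ i < l, 0 ≤ c i)
    (hneg : ∀ i, l ≤ i → i ≤ m → c i ≤ 0) {j k : ℕ} (hjm : j ≤ m) (hj : 0 < c j)
    (hkm : k ≤ m) (hk : c k < 0) :
    ∃ x ∈ Ioi (0 : ℝ), shiftedPowSum m l c x = 0 := by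
  have h0 := (tendsto_shiftedPowSum_nhdsGT_zero hpos hneg hjm hj).eventually_ge_atTop 0
  have hinf := eventually_shiftedPowSum_neg_atTop hpos hneg hkm hk
  exact isPreconnected_Ioi.intermediate_value₂_eventually₂ (l₂ := 𝓝[>] 0)
    (le_principal_iff.2 (Ioi_mem_atTop 0))
    inf_le_right continuousOn_shiftedPowSum continuousOn_const (hinf.mono fun _ hx => hx.le) h0

end shiftedPowSum

lemma pow_mul_one_sub_pow_eq {t : ℝ} (ht : t ≠ 1) {i m : ℕ} (hi : i ≤ m) :
    t ^ i * (1 - t) ^ (m - i) = (t / (1 - t)) ^ i * (1 - t) ^ m := by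
  rw [div_pow, ← pow_sub_mul_pow (1 - t) hi]
  field_simp [sub_ne_zero.2 ht.symm]

lemma strictMonoOn_div_one_sub : StrictMonoOn (fun t : ℝ => t / (1 - t)) (Iio 1) := by
  intro x hx y hy hxy
  rw [div_lt_div_iff₀ (sub_pos.2 hx) (sub_pos.2 hy)]
  nlinarith

theorem exists_sign_change_bernsteinForm {m l : ℕ} {c : ℕ → ℝ} (hpos : ∀ i < l, 0 ≤ c i)
    (hneg : ∀ i, l ≤ i → i ≤ m → c i ≤ 0) {j k : ℕ} (hjm : j ≤ m) (hj : 0 < c j)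
    (hkm : k ≤ m) (hk : c k < 0) :
    ∃ s ∈ Ioo (0 : ℝ) 1,
      (∀ t ∈ Ioo 0 s, 0 < ∑ i ∈ range (m + 1), c i * t ^ i * (1 - t) ^ (m - i)) ∧
      ∑ i ∈ range (m + 1), c i * s ^ i * (1 - s) ^ (m - i) = 0 ∧
      ∀ t ∈ Ioo s 1, ∑ i ∈ range (m + 1), c i * t ^ i * (1 - t) ^ (m - i) < 0 := by
  obtain ⟨x₀, hx₀ : 0 < x₀, hQ⟩ := exists_shiftedPowSum_eq_zero hpos hneg hjm hj hkm hk
  have hanti := strictAntiOn_shiftedPowSum hpos hneg hjm hj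
  have hφ_pos : ∀ t ∈ Ioo (0 : ℝ) 1, t / (1 - t) ∈ Ioi (0 : ℝ) := fun t ht =>
    div_pos ht.1 (sub_pos.2 ht.2)
  have hG : ∀ t ∈ Ioo (0 : ℝ) 1, ∑ i ∈ range (m + 1), c i * t ^ i * (1 - t) ^ (m - i) =
      (1 - t) ^ m * (t / (1 - t)) ^ l * shiftedPowSum m l c (t / (1 - t)) := by
    intro t ht
    rw [mul_assoc, pow_mul_shiftedPowSum (hφ_pos t ht).ne', mul_sum]
    refine sum_congr rfl fun i hi => ?_
    rw [mul_assoc, pow_mul_one_sub_pow_eq ht.2.ne (Nat.lt_succ_iff.1 (mem_range.1 hi))]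
    ring
  have hweight : ∀ t ∈ Ioo (0 : ℝ) 1, 0 < (1 - t) ^ m * (t / (1 - t)) ^ l := fun t ht =>
    mul_pos (pow_pos (sub_pos.2 ht.2) _) (pow_pos (hφ_pos t ht) _)
  set s := x₀ / (1 + x₀)
  have hs : s ∈ Ioo (0 : ℝ) 1 :=
    ⟨by positivity, (div_lt_one (by positivity)).2 (by linarith)⟩
  have hφs : s / (1 - s) = x₀ := by
    have h1s : 1 - s = (1 + x₀)⁻¹ := by
      simp only [s]
      field_simp
      ring
    rw [h1s, div_inv_eq_mul, div_mul_cancel₀ _ (by positivity)]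
  refine ⟨s, hs, fun t ht => ?_, ?_, fun t ht => ?_⟩
  · have ht' : t ∈ Ioo (0 : ℝ) 1 := ⟨ht.1, ht.2.trans hs.2⟩
    have hlt : t / (1 - t) < s / (1 - s) := strictMonoOn_div_one_sub ht'.2 hs.2 ht.2
    rw [hG t ht']
    refine mul_pos (hweight t ht') ?_
    rw [← hQ, ← hφs]
    exact hanti (hφ_pos t ht') (hφ_pos s hs) hlt
  · rw [hG s hs, hφs, hQ, mul_zero]
  · have ht' : t ∈ Ioo (0 : ℝ) 1 := ⟨hs.1.trans ht.1, ht.2⟩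
    have hlt : s / (1 - s) < t / (1 - t) := strictMonoOn_div_one_sub hs.2 ht'.2 ht.1
    rw [hG t ht']
    refine mul_neg_of_pos_of_neg (hweight t ht') ?_
    rw [← hQ, ← hφs]
    exact hanti (hφ_pos s hs) (hφ_pos t ht') hlt

theorem strictMonoOn_strictAntiOn_of_deriv_sign {f : ℝ → ℝ} {a b s : ℝ}
    (hf : ContinuousOn f (Icc a b)) (hs : s ∈ Icc a b) (hpos : ∀ t ∈ Ioo a s, 0 < deriv f t)
    (hneg : ∀ t ∈ Ioo s b, deriv f t < 0) :
    StrictMonoOn f (Icc a s) ∧ StrictAntiOn f (Icc s b) ∧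
      ∀ t ∈ Icc a b, t ≠ s → f t < f s := by
  have hmono : StrictMonoOn f (Icc a s) := strictMonoOn_of_deriv_pos (convex_Icc a s)
    (hf.mono (Icc_subset_Icc_right hs.2)) (by rwa [interior_Icc])
  have hanti : StrictAntiOn f (Icc s b) := strictAntiOn_of_deriv_neg (convex_Icc s b)
    (hf.mono (Icc_subset_Icc_left hs.1)) (by rwa [interior_Icc])
  refine ⟨hmono, hanti, fun t ht hts => ?_⟩
  rcases hts.lt_or_gt with h | h
  · exact hmono ⟨ht.1, h.le⟩ ⟨hs.1, le_rfl⟩ h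
  · exact hanti ⟨le_rfl, hs.2⟩ ⟨h.le, ht.2⟩ h

theorem bernstein_unimodal_general (n : ℕ) (a : ℕ → ℝ) (l : ℕ)
    (hl : 2 ≤ l) (hl' : l ≤ n - 1)
    (h01 : a 0 = a 1) (h12 : a 1 < a 2)
    (hup : ∀ i, 2 ≤ i → i < l → a i ≤ a (i+1))
    (hdown : ∀ i, l ≤ i → i < n - 1 → a (i+1) ≤ a i)
    (hlast : a n < a (n-1)) :
    ∃ s ∈ Ioo (0:ℝ) 1,
      (∀ t ∈ Ioo (0:ℝ) s,
        0 < deriv (fun t : ℝ => ∑ i ∈ Finset.range (n+1),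
            a i * (n.choose i : ℝ) * t ^ i * (1 - t) ^ (n - i)) t) ∧
      deriv (fun t : ℝ => ∑ i ∈ Finset.range (n+1),
          a i * (n.choose i : ℝ) * t ^ i * (1 - t) ^ (n - i)) s = 0 ∧
      (∀ t ∈ Ioo s (1:ℝ),
        deriv (fun t : ℝ => ∑ i ∈ Finset.range (n+1),
            a i * (n.choose i : ℝ) * t ^ i * (1 - t) ^ (n - i)) t < 0) ∧
      StrictMonoOn (fun t : ℝ => ∑ i ∈ Finset.range (n+1),
          a i * (n.choose i : ℝ) * t ^ i * (1 - t) ^ (n - i)) (Icc (0:ℝ) s) ∧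
      StrictAntiOn (fun t : ℝ => ∑ i ∈ Finset.range (n+1),
          a i * (n.choose i : ℝ) * t ^ i * (1 - t) ^ (n - i)) (Icc s (1:ℝ)) ∧
      (∀ t ∈ Icc (0:ℝ) 1, t ≠ s →
        (∑ i ∈ Finset.range (n+1),
            a i * (n.choose i : ℝ) * t ^ i * (1 - t) ^ (n - i))
          < ∑ i ∈ Finset.range (n+1),
              a i * (n.choose i : ℝ) * s ^ i * (1 - s) ^ (n - i)) := by
  obtain ⟨m, rfl⟩ : ∃ m, n = m + 1 := ⟨n - 1, by omega⟩
  simp only [Nat.add_sub_cancel] at hl' hdown hlast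
  set c : ℕ → ℝ := fun i => (a (i + 1) - a i) * m.choose i
  have hcpos : ∀ i < l, 0 ≤ c i := fun i hi => by
    refine mul_nonneg (sub_nonneg.2 ?_) (Nat.cast_nonneg _)
    match i with
    | 0 => exact h01.le
    | 1 => exact h12.le
    | i + 2 => exact hup _ (by omega) hi
  have hcneg : ∀ i, l ≤ i → i ≤ m → c i ≤ 0 := fun i hli him => by
    refine mul_nonpos_of_nonpos_of_nonneg (sub_nonpos.2 ?_) (Nat.cast_nonneg _)
    rcases him.lt_or_eq with him | rfl
    · exact hdown i hli him
    · exact hlast.le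
  have hc1 : 0 < c 1 := mul_pos (sub_pos.2 h12) (by exact_mod_cast Nat.choose_pos (by omega))
  have hcm : c m < 0 := by simpa [c] using hlast
  obtain ⟨s, hs, hpos, hzero, hneg⟩ :=
    exists_sign_change_bernsteinForm hcpos hcneg (by omega : 1 ≤ m) hc1 le_rfl hcm
  have hderiv := fun t => (hasDerivAt_bernstein_sum m a t).deriv
  have hm : (0 : ℝ) < m + 1 := by positivity
  refine ⟨s, hs, fun t ht => ?_, ?_, fun t ht => ?_, strictMonoOn_strictAntiOn_of_deriv_sign
    (fun t _ => (hasDerivAt_bernstein_sum m a t).continuousAt.continuousWithinAt)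
    (Ioo_subset_Icc_self hs) (fun t ht => ?_) (fun t ht => ?_)⟩
  all_goals rw [hderiv]
  · exact mul_pos hm (hpos t ht)
  · rw [hzero, mul_zero]
  · exact mul_neg_of_pos_of_neg hm (hneg t ht)
  · exact mul_pos hm (hpos t ht)
  · exact mul_neg_of_pos_of_neg hm (hneg t ht)

/-- Unimodality: if `a_0 = a_1 < a_2 ≤ ⋯ ≤ a_l` and `a_l ≥ ⋯ ≥ a_{n-1} > a_n`, then
there is `s ∈ (0,1)` with `F_a' > 0` on `(0,s)`, `F_a'(s) = 0`, `F_a' < 0` on `(s,1)`;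
`F_a` is strictly increasing on `[0,s]`, strictly decreasing on `[s,1]`, and `s` is
the unique maximum point of `F_a` on `[0,1]`. -/
theorem bernstein_unimodal (n : ℕ) (hn : 3 ≤ n) (a : ℕ → ℝ) (l : ℕ)
    (hl : 2 ≤ l) (hl' : l ≤ n - 1)
    (h01 : a 0 = a 1) (h12 : a 1 < a 2)
    (hup : ∀ i, 2 ≤ i → i < l → a i ≤ a (i+1))
    (hdown : ∀ i, l ≤ i → i < n - 1 → a (i+1) ≤ a i)
    (hlast : a n < a (n-1)) :
    ∃ s ∈ Ioo (0:ℝ) 1,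
      (∀ t ∈ Ioo (0:ℝ) s,
        0 < deriv (fun t : ℝ => ∑ i ∈ Finset.range (n+1),
            a i * (n.choose i : ℝ) * t ^ i * (1 - t) ^ (n - i)) t) ∧
      deriv (fun t : ℝ => ∑ i ∈ Finset.range (n+1),
          a i * (n.choose i : ℝ) * t ^ i * (1 - t) ^ (n - i)) s = 0 ∧
      (∀ t ∈ Ioo s (1:ℝ),
        deriv (fun t : ℝ => ∑ i ∈ Finset.range (n+1),
            a i * (n.choose i : ℝ) * t ^ i * (1 - t) ^ (n - i)) t < 0) ∧
      StrictMonoOn (fun t : ℝ => ∑ i ∈ Finset.range (n+1),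
          a i * (n.choose i : ℝ) * t ^ i * (1 - t) ^ (n - i)) (Icc (0:ℝ) s) ∧
      StrictAntiOn (fun t : ℝ => ∑ i ∈ Finset.range (n+1),
          a i * (n.choose i : ℝ) * t ^ i * (1 - t) ^ (n - i)) (Icc s (1:ℝ)) ∧
      (∀ t ∈ Icc (0:ℝ) 1, t ≠ s →
        (∑ i ∈ Finset.range (n+1),
            a i * (n.choose i : ℝ) * t ^ i * (1 - t) ^ (n - i))
          < ∑ i ∈ Finset.range (n+1),
              a i * (n.choose i : ℝ) * s ^ i * (1 - s) ^ (n - i)) :=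
  bernstein_unimodal_general n a l hl hl' h01 h12 hup hdown hlast
end

section
/- The closure, in the uniform norm on [0,1], of the set of finite nonnegative linear combinations of Bernstein polynomials with nondecreasing coefficient sequences is exactly the set of nondecreasing continuous real-valued functions on [0,1]. -/
open Finset Set

/-- The set `D₁` of nonnegative linear combinations of Bernstein polynomials with
nondecreasing coefficient sequences, as continuous functions on `[0,1]`. -/
def monotoneBernsteinCombos : Set C(Icc (0:ℝ) 1, ℝ) :=
  {f | ∃ (N : ℕ) (c : Fin N → ℝ) (m : Fin N → ℕ) (a : Fin N → ℕ → ℝ),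
    (∀ k, 0 ≤ c k) ∧
    (∀ k i, i < m k → a k i ≤ a k (i+1)) ∧
    (∀ x : Icc (0:ℝ) 1, f x = ∑ k, c k * ∑ i ∈ Finset.range (m k + 1),
        a k i * ((m k).choose i : ℝ) * (x:ℝ) ^ i * (1 - (x:ℝ)) ^ (m k - i))}

/-! A nonnegative combination of Bernstein sums with nondecreasing coefficients is nondecreasing,
because the derivative of `∑ aᵢ B_{m,i}` is `m ∑ (aᵢ₊₁ - aᵢ) B_{m-1,i}`, nonnegative on `[0,1]`;
so the closure consists of nondecreasing functions, a closed condition. Conversely, the Bernstein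
approximations of a nondecreasing `f` have the nondecreasing coefficients `f (i/n)` and converge
uniformly to `f`. -/

open Polynomial

theorem bernsteinPolynomial.derivative_sum_smul_s11 {R : Type*} [CommRing R] (m : ℕ) (a : ℕ → R) :
    derivative (∑ i ∈ range (m + 1), a i • bernsteinPolynomial R m i) =
      m * ∑ i ∈ range m, (a (i + 1) - a i) • bernsteinPolynomial R (m - 1) i := by
  rcases m with _ | n
  · simp [bernsteinPolynomial]
  have hshift : ∑ i ∈ range (n + 1), a i • bernsteinPolynomial R n i =
      ∑ i ∈ range (n + 1), a (i + 1) • bernsteinPolynomial R n (i + 1) +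
        a 0 • bernsteinPolynomial R n 0 := by
    rw [← sum_range_succ' (fun i => a i • bernsteinPolynomial R n i), sum_range_succ _ (n + 1),
      bernsteinPolynomial.eq_zero_of_lt R (Nat.lt_succ_self n), smul_zero, add_zero]
  rw [sum_range_succ', derivative_add, derivative_sum, Nat.add_sub_cancel]
  simp only [derivative_smul, bernsteinPolynomial.derivative_succ,
    bernsteinPolynomial.derivative_zero, Nat.add_sub_cancel, sub_smul, sum_sub_distrib, hshift,
    mul_smul_comm, smul_sub, mul_sub, mul_add, mul_sum, neg_mul, smul_neg]
  ring

theorem bernsteinPolynomial.eval_nonneg_s11 {n ν : ℕ} {x : ℝ} (hx : x ∈ Icc (0 : ℝ) 1) :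
    0 ≤ (bernsteinPolynomial ℝ n ν).eval x :=
  bernstein_nonneg (x := ⟨x, hx⟩)

theorem bernsteinPolynomial.monotoneOn_eval_sum_smul_s11 {m : ℕ} {a : ℕ → ℝ}
    (ha : ∀ i < m, a i ≤ a (i + 1)) :
    MonotoneOn (fun x => (∑ i ∈ range (m + 1), a i • bernsteinPolynomial ℝ m i).eval x)
      (Icc 0 1) := by
  set p := ∑ i ∈ range (m + 1), a i • bernsteinPolynomial ℝ m i
  refine monotoneOn_of_deriv_nonneg (convex_Icc 0 1) p.continuousOn p.differentiableOn
    fun x hx => ?_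
  rw [interior_Icc] at hx
  rw [Polynomial.deriv, bernsteinPolynomial.derivative_sum_smul_s11, eval_mul, eval_finsetSum]
  refine mul_nonneg (by simp) (sum_nonneg fun i hi => ?_)
  rw [eval_smul, smul_eq_mul]
  exact mul_nonneg (sub_nonneg.2 (ha i (mem_range.1 hi)))
    (bernsteinPolynomial.eval_nonneg_s11 (Ioo_subset_Icc_self hx))

theorem bernsteinPolynomial.eval_sum_smul (m : ℕ) (a : ℕ → ℝ) (x : ℝ) :
    (∑ i ∈ range (m + 1), a i • bernsteinPolynomial ℝ m i).eval x =
      ∑ i ∈ range (m + 1), a i * (m.choose i : ℝ) * x ^ i * (1 - x) ^ (m - i) := by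
  simp [eval_finsetSum, bernsteinPolynomial, mul_assoc]

theorem monotone_of_mem_monotoneBernsteinCombos {f : C(Icc (0:ℝ) 1, ℝ)}
    (hf : f ∈ monotoneBernsteinCombos) : Monotone f := by
  obtain ⟨N, c, m, a, hc, ha, hfx⟩ := hf
  intro x y hxy
  simp only [hfx, ← bernsteinPolynomial.eval_sum_smul]
  exact sum_le_sum fun k _ => mul_le_mul_of_nonneg_left
    (bernsteinPolynomial.monotoneOn_eval_sum_smul_s11 (ha k) x.2 y.2 hxy) (hc k)

theorem bernsteinApproximation_mem_monotoneBernsteinCombos (n : ℕ) {f : C(Icc (0:ℝ) 1, ℝ)}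
    (hf : Monotone f) : bernsteinApproximation n f ∈ monotoneBernsteinCombos := by
  -- `projIcc` clamps `i / n` into `[0,1]`, so the coefficients are defined for all `i : ℕ`
  set a : ℕ → ℝ := fun i => f (projIcc 0 1 zero_le_one (i / n))
  refine ⟨1, fun _ => 1, fun _ => n, fun _ => a, fun _ => zero_le_one,
    fun _ i _ => hf (monotone_projIcc _ ?_), fun x => ?_⟩
  · gcongr
    simp
  have hz (k : Fin (n + 1)) : projIcc 0 1 zero_le_one ((k : ℕ) / n : ℝ) = bernstein.z k :=
    projIcc_of_mem _ (bernstein.z k).2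
  rw [Fin.sum_univ_one, one_mul, bernsteinApproximation.apply,
    ← Fin.sum_univ_eq_sum_range (fun i => a i * (n.choose i : ℝ) * x ^ i * (1 - x) ^ (n - i))]
  refine sum_congr rfl fun k _ => ?_
  simp only [a, hz, bernstein_apply, smul_eq_mul]
  ring

/-- The closure in uniform norm of `D₁` is exactly the set of nondecreasing
continuous functions on `[0,1]`. -/
theorem closure_monotoneBernsteinCombos :
    closure monotoneBernsteinCombos
      = {f : C(Icc (0:ℝ) 1, ℝ) | Monotone f} := by
  refine (closure_minimal (fun f => monotone_of_mem_monotoneBernsteinCombos)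
    (isClosed_monotone.preimage continuous_coeFun)).antisymm fun f hf => ?_
  exact mem_closure_of_tendsto (bernsteinApproximation_uniform f)
    (.of_forall fun n => bernsteinApproximation_mem_monotoneBernsteinCombos n hf)
end

section
/- Let F be continuously differentiable on [0,1] with F'(0) \ge 0, F'(1) \le 0, and F' decreasing. Then for every \epsilon > 0 there exist n \ge 2 and coefficients a_0, ..., a_n satisfying a_1 - a_0 > 0, a_n - a_{n-1} < 0, and a_{i+1} + a_{i-1} \le 2 a_i for i = 1, ..., n-1, such that \|F_a - F\|_\infty + \|F_a' - F'\|_\infty < \epsilon. -/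
/-!
Take as coefficients the samples `F (i / n)` plus the samples of the bump `η t (1 - t)`. Since
`F'` is antitone, the mean value theorem makes the samples of `F` a concave sequence, and the
bump turns `F' 0 ≥ 0`, `F' 1 ≤ 0` into strict end conditions once `F'` varies by less than
`η / 2` on each cell of the grid. Bernstein's theorem approximates `F`. The derivative of the
degree-`n` Bernstein sum is the degree-`(n - 1)` Bernstein sum of the differences
`n (a (i + 1) - a i)`. Without the bump these differences and `F' (i / (n - 1))` both lie between
`F' ((i + 1) / n)` and `F' (i / n)`, and the bump moves them by at most `η`, so Bernstein's
theorem for `F'` approximates the derivative.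
-/

open Finset Set Filter

noncomputable def bernsteinSum (n : ℕ) (a : ℕ → ℝ) (x : ℝ) : ℝ :=
  ∑ i ∈ range (n + 1), a i * (n.choose i : ℝ) * x ^ i * (1 - x) ^ (n - i)

theorem bernsteinSum_const_one (n : ℕ) (x : ℝ) : bernsteinSum n (fun _ => 1) x = 1 := by
  calc bernsteinSum n (fun _ => 1) x = (x + (1 - x)) ^ n := by
        rw [add_pow, bernsteinSum]
        exact sum_congr rfl fun i _ => by ring
    _ = 1 := by rw [add_sub_cancel, one_pow]

theorem bernsteinSum_sub (n : ℕ) (a b : ℕ → ℝ) (x : ℝ) :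
    bernsteinSum n a x - bernsteinSum n b x = bernsteinSum n (a - b) x := by
  simp only [bernsteinSum, ← sum_sub_distrib, Pi.sub_apply, sub_mul]

theorem abs_bernsteinSum_le {n : ℕ} {a : ℕ → ℝ} {M : ℝ} (ha : ∀ i ≤ n, |a i| ≤ M)
    {x : ℝ} (hx : x ∈ Icc (0 : ℝ) 1) : |bernsteinSum n a x| ≤ M := by
  obtain ⟨hx0, hx1⟩ := hx
  calc |bernsteinSum n a x|
      ≤ ∑ i ∈ range (n + 1), |a i| * (n.choose i : ℝ) * x ^ i * (1 - x) ^ (n - i) := by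
        refine (abs_sum_le_sum_abs _ _).trans_eq (sum_congr rfl fun i _ => ?_)
        simp only [abs_mul, abs_pow, Nat.abs_cast, abs_of_nonneg hx0,
          abs_of_nonneg (sub_nonneg.2 hx1)]
    _ ≤ ∑ i ∈ range (n + 1), M * (n.choose i : ℝ) * x ^ i * (1 - x) ^ (n - i) := by
        gcongr with i hi
        exact ha i (Nat.lt_succ_iff.mp (mem_range.mp hi))
    _ = M * bernsteinSum n (fun _ => 1) x := by
        rw [bernsteinSum, mul_sum]
        exact sum_congr rfl fun i _ => by ring
    _ = M := by rw [bernsteinSum_const_one, mul_one]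

theorem tendstoUniformlyOn_bernsteinSum {g : ℝ → ℝ} (hg : ContinuousOn g (Icc (0 : ℝ) 1)) :
    TendstoUniformlyOn (fun n => bernsteinSum n fun i => g (i / n)) g atTop (Icc (0 : ℝ) 1) := by
  rw [tendstoUniformlyOn_iff_tendstoUniformly_comp_coe]
  have := ContinuousMap.tendsto_iff_tendstoUniformly.mp
    (bernsteinApproximation_uniform ⟨(Icc (0 : ℝ) 1).domRestrict g, hg.domRestrict⟩)
  convert this using 2 with n
  · ext x
    simp only [bernsteinApproximation.apply, bernstein_apply, bernsteinSum, smul_eq_mul]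
    rw [← Fin.sum_univ_eq_sum_range]
    refine sum_congr rfl fun k _ => ?_
    simp only [bernstein.z, ContinuousMap.coe_mk, domRestrict_apply]
    ring
  · rfl

theorem eventually_abs_bernsteinSum_sub_lt {g : ℝ → ℝ} (hg : ContinuousOn g (Icc 0 1))
    {ε : ℝ} (hε : 0 < ε) :
    ∀ᶠ n : ℕ in atTop, ∀ x ∈ Icc (0 : ℝ) 1,
      |bernsteinSum n (fun i => g (i / n)) x - g x| < ε := by
  filter_upwards [Metric.tendstoUniformlyOn_iff.mp (tendstoUniformlyOn_bernsteinSum hg) ε hε]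
    with n hn x hx
  rw [abs_sub_comm, ← Real.dist_eq]
  exact hn x hx

theorem abs_bernsteinSum_sub_le_add {n : ℕ} {a b : ℕ → ℝ} {M : ℝ}
    (hab : ∀ i ≤ n, |a i - b i| ≤ M) {x : ℝ} (hx : x ∈ Icc (0 : ℝ) 1) (y : ℝ) :
    |bernsteinSum n a x - y| ≤ M + |bernsteinSum n b x - y| := by
  refine (abs_sub_le _ (bernsteinSum n b x) y).trans (add_le_add_left ?_ _)
  rw [bernsteinSum_sub]
  exact abs_bernsteinSum_le hab hx

theorem hasDerivAt_bernsteinSum_succ (n : ℕ) (a : ℕ → ℝ) (x : ℝ) :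
    HasDerivAt (bernsteinSum (n + 1) a)
      (bernsteinSum n (fun i => (n + 1) * (a (i + 1) - a i)) x) x := by
  set c : ℕ → ℝ := fun i => a i * ((n + 1).choose i : ℝ)
  have hterm : ∀ i ∈ range (n + 2), HasDerivAt
      (fun s : ℝ => c i * s ^ i * (1 - s) ^ (n + 1 - i))
      (c i * i * x ^ (i - 1) * (1 - x) ^ (n + 1 - i)
        - c i * (n + 1 - i : ℕ) * x ^ i * (1 - x) ^ (n - i)) x := by
    intro i _
    refine (((hasDerivAt_pow i x).const_mul (c i)).fun_mul
      (((hasDerivAt_id' x).const_sub 1).fun_pow (n + 1 - i))).congr_deriv ?_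
    rw [show n + 1 - i - 1 = n - i by omega]
    ring
  refine (HasDerivAt.fun_sum hterm).congr_deriv ?_
  rw [sum_sub_distrib, sum_range_succ', sum_range_succ _ (n + 1)]
  simp only [Nat.cast_zero, mul_zero, zero_mul, add_zero, Nat.sub_self, Nat.add_sub_cancel,
    Nat.add_sub_add_right, bernsteinSum, ← sum_sub_distrib]
  refine sum_congr rfl fun i _ => ?_
  have h1 : ((n + 1).choose (i + 1) : ℝ) * (i + 1 : ℕ) = (n + 1) * n.choose i := by
    exact_mod_cast (Nat.add_one_mul_choose_eq n i).symm
  have h2 : ((n + 1).choose i : ℝ) * (n + 1 - i : ℕ) = n.choose i * (n + 1) := by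
    exact_mod_cast (Nat.choose_mul_succ_eq n i).symm
  simp only [c]
  linear_combination
    (a (i + 1) * x ^ i * (1 - x) ^ (n - i)) * h1 - (a i * x ^ i * (1 - x) ^ (n - i)) * h2

theorem sub_mem_Icc_of_antitoneOn_deriv {F F' : ℝ → ℝ} {a b : ℝ}
    (hF : ∀ t ∈ Icc a b, HasDerivWithinAt F (F' t) (Icc a b) t) (hF' : AntitoneOn F' (Icc a b))
    {p q : ℝ} (hap : a ≤ p) (hpq : p < q) (hqb : q ≤ b) :
    F q - F p ∈ Icc ((q - p) * F' q) ((q - p) * F' p) := by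
  have hsub : Icc p q ⊆ Icc a b := Icc_subset_Icc hap hqb
  obtain ⟨ξ, hξ, hslope⟩ := exists_hasDerivAt_eq_slope F F' hpq
    (fun t ht => (hF t (hsub ht)).continuousWithinAt.mono hsub)
    (fun t ht => (hF t (hsub (Ioo_subset_Icc_self ht))).hasDerivAt
      (Icc_mem_nhds (hap.trans_lt ht.1) (ht.2.trans_le hqb)))
  have hξ' : ξ ∈ Icc a b := hsub (Ioo_subset_Icc_self hξ)
  have hpq' : 0 < q - p := sub_pos.2 hpq
  rw [eq_div_iff hpq'.ne', mul_comm] at hslope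
  rw [← hslope]
  exact ⟨by gcongr; exact hF' hξ' ⟨hap.trans hpq.le, hqb⟩ hξ.2.le,
    by gcongr; exact hF' ⟨hap, hpq.le.trans hqb⟩ hξ' hξ.1.le⟩

theorem grid_slope_mem_Icc_of_antitoneOn_deriv {F F' : ℝ → ℝ}
    (hF : ∀ t ∈ Icc (0 : ℝ) 1, HasDerivWithinAt F (F' t) (Icc 0 1) t)
    (hF' : AntitoneOn F' (Icc 0 1)) {n i : ℕ} (hi : i < n) :
    (n : ℝ) * (F ((i + 1) / n) - F (i / n)) ∈ Icc (F' ((i + 1) / n)) (F' (i / n)) := by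
  have hn : (0 : ℝ) < n := by exact_mod_cast (Nat.zero_le i).trans_lt hi
  have hi' : (i : ℝ) + 1 ≤ n := by exact_mod_cast hi
  have h := sub_mem_Icc_of_antitoneOn_deriv hF hF' (p := i / n) (q := (i + 1) / n) (by positivity)
    (by gcongr; linarith) ((div_le_one hn).2 hi')
  rw [← sub_div, add_sub_cancel_left, one_div_mul_eq_div, one_div_mul_eq_div] at h
  exact ⟨(div_le_iff₀' hn).1 h.1, (le_div_iff₀' hn).1 h.2⟩

theorem ContinuousOn.eventually_forall_abs_grid_sub_lt {g : ℝ → ℝ}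
    (hg : ContinuousOn g (Icc 0 1)) {ε : ℝ} (hε : 0 < ε) :
    ∀ᶠ n : ℕ in atTop, ∀ i < n, |g ((i + 1) / n) - g (i / n)| < ε := by
  obtain ⟨δ, hδ, hgδ⟩ := Metric.uniformContinuousOn_iff.mp
    (isCompact_Icc.uniformContinuousOn_of_continuous hg) ε hε
  filter_upwards [tendsto_one_div_atTop_nhds_zero_nat.eventually (gt_mem_nhds hδ)] with n hn i hi
  have hn0 : (0 : ℝ) < n := by exact_mod_cast (Nat.zero_le i).trans_lt hi
  have hi' : (i : ℝ) + 1 ≤ n := by exact_mod_cast hi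
  refine hgδ _ ⟨by positivity, (div_le_one hn0).2 hi'⟩ _
    ⟨by positivity, (div_le_one hn0).2 (by linarith)⟩ ?_
  rwa [Real.dist_eq, ← sub_div, add_sub_cancel_left, abs_of_pos (by positivity)]

noncomputable def perturbedSamples (F : ℝ → ℝ) (η : ℝ) (n i : ℕ) : ℝ :=
  F (i / n) + η * (i / n) * (1 - i / n)

theorem abs_perturbedSamples_sub_le (F : ℝ → ℝ) {η : ℝ} (hη : 0 ≤ η) {n i : ℕ}
    (hi : i ≤ n) :
    |perturbedSamples F η n i - F (i / n)| ≤ η := by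
  have ht₀ : (0 : ℝ) ≤ i / n := by positivity
  have ht₁ : (i : ℝ) / n ≤ 1 := div_le_one_of_le₀ (by exact_mod_cast hi) (Nat.cast_nonneg n)
  rw [perturbedSamples, add_sub_cancel_left, abs_of_nonneg (by bound)]
  nlinarith [mul_nonneg hη ht₀]

theorem perturbedSamples_succ_add_pred_le {F F' : ℝ → ℝ}
    (hF : ∀ t ∈ Icc (0 : ℝ) 1, HasDerivWithinAt F (F' t) (Icc 0 1) t)
    (hF' : AntitoneOn F' (Icc 0 1)) {η : ℝ} (hη : 0 ≤ η) {n i : ℕ} (hi₁ : 1 ≤ i)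
    (hi₂ : i ≤ n - 1) :
    perturbedSamples F η n (i + 1) + perturbedSamples F η n (i - 1) ≤
      2 * perturbedSamples F η n i := by
  obtain ⟨j, rfl⟩ := Nat.exists_eq_add_of_le' hi₁
  have hn : (0 : ℝ) < n := by exact_mod_cast (show 0 < n by omega)
  have h₀ := grid_slope_mem_Icc_of_antitoneOn_deriv hF hF' (n := n) (i := j) (by omega)
  have h₁ := grid_slope_mem_Icc_of_antitoneOn_deriv hF hF' (n := n) (i := j + 1) (by omega)
  push_cast at h₁
  have hFconc : F ((j + 1 + 1) / n) - F ((j + 1) / n) ≤ F ((j + 1) / n) - F (j / n) :=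
    le_of_mul_le_mul_left (h₁.2.trans h₀.1) hn
  have hquad : η * ((j + 1 + 1) / n) * (1 - (j + 1 + 1) / n) + η * (j / n) * (1 - j / n)
      - 2 * (η * ((j + 1) / n) * (1 - (j + 1) / n)) = -(2 * η / n ^ 2) := by
    field_simp; ring
  simp only [perturbedSamples, Nat.add_sub_cancel]
  push_cast
  linarith [show 0 ≤ 2 * η / n ^ 2 by positivity]

theorem perturbedSamples_one_sub_zero_pos {F F' : ℝ → ℝ}
    (hF : ∀ t ∈ Icc (0 : ℝ) 1, HasDerivWithinAt F (F' t) (Icc 0 1) t)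
    (hF' : AntitoneOn F' (Icc 0 1)) (hF'0 : 0 ≤ F' 0) {η : ℝ} (hη : 0 ≤ η) {n : ℕ}
    (hn : 2 ≤ n) (hosc : ∀ i < n, |F' ((i + 1) / n) - F' (i / n)| < η / 2) :
    0 < perturbedSamples F η n 1 - perturbedSamples F η n 0 := by
  have hn' : (2 : ℝ) ≤ n := by exact_mod_cast hn
  have h₀ := (grid_slope_mem_Icc_of_antitoneOn_deriv hF hF' (n := n) (i := 0) (by omega)).1
  have hosc₀ := (abs_lt.1 (hosc 0 (by omega))).1
  simp only [Nat.cast_zero, zero_add, zero_div] at h₀ hosc₀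
  suffices 0 < (n : ℝ) * (perturbedSamples F η n 1 - perturbedSamples F η n 0) from
    pos_of_mul_pos_right this (by positivity)
  have hηn : η / 2 ≤ η * (1 - 1 / n) := by
    have : (1 : ℝ) / n ≤ 1 / 2 := by gcongr
    nlinarith
  have hsplit : (n : ℝ) * (perturbedSamples F η n 1 - perturbedSamples F η n 0) =
      n * (F (1 / n) - F 0) + η * (1 - 1 / n) := by
    simp only [perturbedSamples, Nat.cast_one, Nat.cast_zero, zero_div, mul_zero, zero_mul,
      add_zero]
    field_simp
    ring
  linarith

theorem perturbedSamples_sub_pred_neg {F F' : ℝ → ℝ}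
    (hF : ∀ t ∈ Icc (0 : ℝ) 1, HasDerivWithinAt F (F' t) (Icc 0 1) t)
    (hF' : AntitoneOn F' (Icc 0 1)) (hF'1 : F' 1 ≤ 0) {η : ℝ} (hη : 0 ≤ η) {n : ℕ}
    (hn : 2 ≤ n) (hosc : ∀ i < n, |F' ((i + 1) / n) - F' (i / n)| < η / 2) :
    perturbedSamples F η n n - perturbedSamples F η n (n - 1) < 0 := by
  obtain ⟨m, rfl⟩ := Nat.exists_eq_add_of_le' (one_le_two.trans hn)
  have hn' : (2 : ℝ) ≤ m + 1 := by exact_mod_cast hn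
  have hlast :=
    (grid_slope_mem_Icc_of_antitoneOn_deriv hF hF' (n := m + 1) (i := m) (by omega)).2
  have hosc₁ := (abs_lt.1 (hosc m (by omega))).1
  push_cast at hlast hosc₁
  rw [div_self (by positivity)] at hlast hosc₁
  set a := perturbedSamples F η (m + 1)
  suffices (m + 1 : ℝ) * (a (m + 1) - a m) < 0 by
    simpa using neg_of_mul_neg_right this (by positivity)
  have hηn : η / 2 ≤ η * (m / (m + 1)) := by
    have : (1 : ℝ) / 2 ≤ m / (m + 1) := by
      rw [div_le_div_iff₀ (by norm_num) (by positivity)]; linarith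
    nlinarith
  have hsplit : (m + 1 : ℝ) * (a (m + 1) - a m) =
      (m + 1) * (F 1 - F (m / (m + 1))) - η * (m / (m + 1)) := by
    simp only [a, perturbedSamples]
    push_cast
    rw [div_self (by positivity)]
    field_simp
    ring
  linarith

theorem abs_grid_slope_perturbedSamples_sub_le {F F' : ℝ → ℝ}
    (hF : ∀ t ∈ Icc (0 : ℝ) 1, HasDerivWithinAt F (F' t) (Icc 0 1) t)
    (hF' : AntitoneOn F' (Icc 0 1)) {η : ℝ} (hη : 0 ≤ η) {m i : ℕ} (hm : 0 < m)
    (hi : i ≤ m) :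
    |((m : ℝ) + 1) * (perturbedSamples F η (m + 1) (i + 1) - perturbedSamples F η (m + 1) i)
        - F' (i / m)| ≤ η + |F' ((i + 1) / (m + 1 : ℕ)) - F' (i / (m + 1 : ℕ))| := by
  have hslope := grid_slope_mem_Icc_of_antitoneOn_deriv hF hF' (n := m + 1) (i := i) (by omega)
  push_cast at hslope ⊢
  have hm' : (0 : ℝ) < m := by exact_mod_cast hm
  have hi' : (i : ℝ) ≤ m := by exact_mod_cast hi
  have hlo : (i : ℝ) / (m + 1) ≤ i / m := by gcongr; linarith
  have hhi : (i : ℝ) / m ≤ (i + 1) / (m + 1) := by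
    rw [div_le_div_iff₀ hm' (by positivity)]; linarith
  have hmem : (i : ℝ) / m ∈ Icc (0 : ℝ) 1 := ⟨by positivity, (div_le_one hm').2 hi'⟩
  have hy : F' (i / m) ∈ Icc (F' ((i + 1) / (m + 1))) (F' (i / (m + 1))) :=
    ⟨hF' hmem ⟨by positivity, (div_le_one (by positivity)).2 (by linarith)⟩ hhi,
      hF' ⟨by positivity, hlo.trans hmem.2⟩ hmem hlo⟩
  set N : ℝ := m + 1
  have hN : 0 < N := by positivity
  set w : ℝ := 1 - (2 * i + 1) / N
  have hw : |w| ≤ 1 := by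
    have : (2 * (i : ℝ) + 1) / N ≤ 2 := (div_le_iff₀ hN).2 (by linarith)
    rw [abs_le]; constructor <;> linarith [show 0 ≤ (2 * (i : ℝ) + 1) / N by positivity]
  have hsplit : N * (perturbedSamples F η (m + 1) (i + 1) - perturbedSamples F η (m + 1) i) =
      N * (F ((i + 1) / N) - F (i / N)) + η * w := by
    simp only [perturbedSamples, w]
    push_cast
    field_simp
    ring
  calc |N * (perturbedSamples F η (m + 1) (i + 1) - perturbedSamples F η (m + 1) i) - F' (i / m)|
      = |(N * (F ((i + 1) / N) - F (i / N)) - F' (i / m)) + η * w| := by rw [hsplit]; ring_nf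
    _ ≤ (F' (i / N) - F' ((i + 1) / N)) + η := by
      refine (abs_add_le _ _).trans (add_le_add ?_ ?_)
      · rw [abs_le]; constructor <;> linarith [hslope.1, hslope.2, hy.1, hy.2]
      · rw [abs_mul, abs_of_nonneg hη]; exact mul_le_of_le_one_right hη hw
    _ ≤ η + |F' ((i + 1) / N) - F' (i / N)| := by
      linarith [neg_abs_le (F' ((i + 1) / N) - F' (i / N))]

theorem abs_bernsteinSum_perturbedSamples_sub_le (F : ℝ → ℝ) {η : ℝ} (hη : 0 ≤ η)
    {n : ℕ} {x : ℝ} (hx : x ∈ Icc (0 : ℝ) 1) :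
    |bernsteinSum n (perturbedSamples F η n) x - F x|
      ≤ η + |bernsteinSum n (fun i => F (i / n)) x - F x| :=
  abs_bernsteinSum_sub_le_add (fun _ hi => abs_perturbedSamples_sub_le F hη hi) hx _

theorem abs_deriv_bernsteinSum_perturbedSamples_sub_le {F F' : ℝ → ℝ}
    (hF : ∀ t ∈ Icc (0 : ℝ) 1, HasDerivWithinAt F (F' t) (Icc 0 1) t)
    (hF' : AntitoneOn F' (Icc 0 1)) {η : ℝ} (hη : 0 ≤ η) {m : ℕ} (hm : 0 < m)
    (hosc : ∀ i < m + 1, |F' ((i + 1) / (m + 1 : ℕ)) - F' (i / (m + 1 : ℕ))| < η / 2)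
    {x : ℝ} (hx : x ∈ Icc (0 : ℝ) 1) :
    |deriv (bernsteinSum (m + 1) (perturbedSamples F η (m + 1))) x - F' x|
      ≤ η + η / 2 + |bernsteinSum m (fun i => F' (i / m)) x - F' x| := by
  rw [(hasDerivAt_bernsteinSum_succ m _ x).deriv]
  refine abs_bernsteinSum_sub_le_add (fun i hi => ?_) hx _
  exact (abs_grid_slope_perturbedSamples_sub_le hF hF' hη hm hi).trans
    (add_le_add_right (hosc i (by omega)).le _)

/-- Every `C¹` function on `[0,1]` with `F'(0) ≥ 0`, `F'(1) ≤ 0` and `F'` decreasing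
can be approximated, in the norm `‖·‖_∞ + ‖(·)'‖_∞`, by a Bernstein polynomial with
strictly-increasing-then-decreasing concave coefficients. -/
theorem concave_bernstein_dense (F F' : ℝ → ℝ)
    (hF : ∀ t ∈ Icc (0:ℝ) 1, HasDerivWithinAt F (F' t) (Icc (0:ℝ) 1) t)
    (hF'c : ContinuousOn F' (Icc (0:ℝ) 1))
    (hF'0 : 0 ≤ F' 0) (hF'1 : F' 1 ≤ 0)
    (hF'dec : AntitoneOn F' (Icc (0:ℝ) 1)) :
    ∀ ε : ℝ, 0 < ε →
      ∃ (n : ℕ) (a : ℕ → ℝ), 2 ≤ n ∧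
        0 < a 1 - a 0 ∧ a n - a (n-1) < 0 ∧
        (∀ i, 1 ≤ i → i ≤ n - 1 → a (i+1) + a (i-1) ≤ 2 * a i) ∧
        (⨆ t : Icc (0:ℝ) 1,
            |(∑ i ∈ Finset.range (n+1),
                a i * (n.choose i : ℝ) * (t:ℝ) ^ i * (1 - (t:ℝ)) ^ (n - i)) - F t|)
          + (⨆ t : Icc (0:ℝ) 1,
              |deriv (fun s : ℝ => ∑ i ∈ Finset.range (n+1),
                  a i * (n.choose i : ℝ) * s ^ i * (1 - s) ^ (n - i)) t - F' t|)
          < ε := by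
  intro ε hε
  set η := ε / 4 with hη_def
  have hη : 0 ≤ η := by positivity
  have hFc : ContinuousOn F (Icc 0 1) := fun t ht => (hF t ht).continuousWithinAt
  have hosc := (tendsto_add_atTop_nat 1).eventually
    (hF'c.eventually_forall_abs_grid_sub_lt (show 0 < η / 2 by positivity))
  have hval := (tendsto_add_atTop_nat 1).eventually
    (eventually_abs_bernsteinSum_sub_lt hFc (show 0 < ε / 8 by positivity))
  have hder := eventually_abs_bernsteinSum_sub_lt hF'c (show 0 < ε / 8 by positivity)
  obtain ⟨m, hm, hosc, hval, hder⟩ :=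
    ((eventually_ge_atTop 1).and (hosc.and (hval.and hder))).exists
  refine ⟨m + 1, perturbedSamples F η (m + 1), by omega,
    perturbedSamples_one_sub_zero_pos hF hF'dec hF'0 hη (by omega) hosc,
    perturbedSamples_sub_pred_neg hF hF'dec hF'1 hη (by omega) hosc,
    fun i hi₁ hi₂ => perturbedSamples_succ_add_pred_le hF hF'dec hη hi₁ hi₂, ?_⟩
  have : Nonempty (Icc (0 : ℝ) 1) := ⟨⟨0, by simp⟩⟩
  have hval' (t : Icc (0 : ℝ) 1) :
      |bernsteinSum (m + 1) (perturbedSamples F η (m + 1)) t - F t| ≤ η + ε / 8 :=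
    (abs_bernsteinSum_perturbedSamples_sub_le F hη t.2).trans (by linarith [hval t t.2])
  have hder' (t : Icc (0 : ℝ) 1) :
      |deriv (bernsteinSum (m + 1) (perturbedSamples F η (m + 1))) t - F' t|
        ≤ η + η / 2 + ε / 8 :=
    (abs_deriv_bernsteinSum_perturbedSamples_sub_le hF hF'dec hη hm hosc t.2).trans
      (by linarith [hder t t.2])
  calc _ ≤ (η + ε / 8) + (η + η / 2 + ε / 8) := add_le_add (ciSup_le hval') (ciSup_le hder')
    _ < ε := by rw [hη_def]; linarith
end
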